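/- Let n ≥ 2 and let w ∈ S^{n-1}. There exists a discrete, separated set E ⊆ 𝔻ⁿ with limit set L(E) = {w} (so dim_H L(E) = dim_B L(E) = 0) and critical exponent δ(E) = n − 1. (For example, take E = ∪_k E_k where E_k is a maximal 2^{-k}-separated set of points at Euclidean distance 2^{-k} from S^{n-1} and within distance 2^{-√k} of w.) -/

import Mathlib

open Metric Set Filter
open scoped ENNReal NNReal

noncomputable section

/-- Points of `ℝⁿ` (Euclidean space). -/
abbrev Pt (n : ℕ) := EuclideanSpace ℝ (Fin n)

/-- `E` is a discrete set: every point of `E` is isolated in `E`. -/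
def IsDiscreteSet {n : ℕ} (E : Set (Pt n)) : Prop :=
  ∀ x ∈ E, ∃ r > 0, closedBall x r ∩ E = {x}

/-- The limit set `L(E) = cl(E) \ E`. -/
def limitSet {n : ℕ} (E : Set (Pt n)) : Set (Pt n) := closure E \ E

/-- `E ⊆ 𝔻ⁿ` is separated. -/
def SeparatedSet {n : ℕ} (E : Set (Pt n)) : Prop :=
  ∃ c₁ : ℝ, 0 < c₁ ∧ c₁ < 1 ∧ ∀ x ∈ E, closedBall x (c₁ * (1 - ‖x‖)) ∩ E = {x}

/-- `E ⊆ 𝔻ⁿ` is well-approximated. -/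
def WellApproximated {n : ℕ} (E : Set (Pt n)) : Prop :=
  ∃ c₂ : ℝ, 1 ≤ c₂ ∧ ∀ x ∈ E, ∃ z ∈ limitSet E, dist x z ≤ c₂ * (1 - ‖x‖)

/-- `E` is `α`-separated. -/
def AlphaSeparated {n : ℕ} (E : Set (Pt n)) (α : ℝ) : Prop :=
  ∃ c₁ : ℝ, 0 < c₁ ∧ ∀ x ∈ E, closedBall x (c₁ * (1 - ‖x‖) ^ α) ∩ E = {x}

/-- `E` is `β`-well-approximated. -/
def BetaWellApproximated {n : ℕ} (E : Set (Pt n)) (β : ℝ) : Prop :=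
  ∃ c₂ : ℝ, 1 ≤ c₂ ∧ ∀ x ∈ E, ∃ z ∈ limitSet E, dist x z ≤ c₂ * (1 - ‖x‖) ^ β

/-- The accumulation series `S_E(s) = ∑_{x ∈ E} (1 - |x|)^s` (valued in `ℝ≥0∞`). -/
def accSeries {n : ℕ} (E : Set (Pt n)) (s : ℝ) : ℝ≥0∞ :=
  ∑' x : E, ENNReal.ofReal ((1 - ‖(x : Pt n)‖) ^ s)

/-- The critical exponent `δ(E) = inf { s ≥ 0 : S_E(s) < ∞ }`, with `inf ∅ = ∞`. -/
def critExp {n : ℕ} (E : Set (Pt n)) : ℝ≥0∞ :=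
  ⨅ (s : ℝ≥0) (_ : accSeries E (s : ℝ) < ⊤), (s : ℝ≥0∞)

/-- The set of `c`-radial limit points of `E`. -/
def radialPoints {n : ℕ} (E : Set (Pt n)) (c : ℝ) : Set (Pt n) :=
  {z | ‖z‖ = 1 ∧ ∀ r > 0, ∃ x ∈ E,
    dist x z ≤ c * (1 - ‖x‖) ∧ c * (1 - ‖x‖) ≤ c * r}

/-- The radial limit set `L_rad(E) = ⋃_{c ≥ 1} L_c(E)`. -/
def radialLimitSet {n : ℕ} (E : Set (Pt n)) : Set (Pt n) :=
  ⋃ c ∈ Ici (1 : ℝ), radialPoints E c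

/-- The set of `(γ, c)`-radial limit points of `E`. -/
def gammaRadialPoints {n : ℕ} (E : Set (Pt n)) (γ c : ℝ) : Set (Pt n) :=
  {z | z ∈ limitSet E ∧ ∀ r > 0, ∃ x ∈ E,
    dist x z ≤ c * (1 - ‖x‖) ^ γ ∧ c * (1 - ‖x‖) ^ γ ≤ c * r ^ γ}

/-- The `γ`-radial limit set `L_rad^γ(E) = ⋃_{c ≥ 1} L_c^γ(E)`. -/
def gammaRadialLimitSet {n : ℕ} (E : Set (Pt n)) (γ : ℝ) : Set (Pt n) :=
  ⋃ c ∈ Ici (1 : ℝ), gammaRadialPoints E γ c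

/-- The packing number `N_δ(F)`: the maximal cardinality of a packing of `F` by
pairwise disjoint closed balls of radius `δ` centred in `F`. -/
def packingNumber {n : ℕ} (F : Set (Pt n)) (δ : ℝ) : ℕ∞ :=
  ⨆ (Z : Finset (Pt n)) (_ : ↑Z ⊆ F)
    (_ : (Z : Set (Pt n)).PairwiseDisjoint fun x => closedBall x δ), (Z.card : ℕ∞)

/-- The upper box dimension `limsup_{δ → 0⁺} log N_δ(F) / (-log δ)`. -/
def upperBoxDim {n : ℕ} (F : Set (Pt n)) : ℝ≥0∞ :=
  limsup (fun δ : ℝ =>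
    ENNReal.ofReal (Real.log ((packingNumber F δ).toNat : ℝ) / (-Real.log δ)))
    (nhdsWithin 0 (Ioi 0))

/-- The lower box dimension `liminf_{δ → 0⁺} log N_δ(F) / (-log δ)`. -/
def lowerBoxDim {n : ℕ} (F : Set (Pt n)) : ℝ≥0∞ :=
  liminf (fun δ : ℝ =>
    ENNReal.ofReal (Real.log ((packingNumber F δ).toNat : ℝ) / (-Real.log δ)))
    (nhdsWithin 0 (Ioi 0))

/-!
On the sphere of radius `1 - 2⁻ᵏ` centred at the origin, place a grid of mesh `2⁻ᵏ` with about
`(2ᵏ / k)ⁿ⁻¹` points inside a cap of radius `O(1/k)` around `w`. Points of one shell are `2⁻ᵏ`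
apart and the shells are spaced geometrically, so their union `E` is separated; the caps shrink
to `w`, so `w` is the only limit point; and the `k`-th shell contributes `2^{k(n-1-s)}` to
`S_E(s)` up to a factor polynomial in `k`, so `δ(E) = n - 1`. The grid is laid out in the last
`n - 1` coordinates, lifted to the sphere as a graph over them, and moved to `w` by a reflection.
-/

open Topology

theorem SeparatedSet.isDiscreteSet {n : ℕ} {E : Set (Pt n)} (hsep : SeparatedSet E)
    (hE : E ⊆ ball 0 1) : IsDiscreteSet E := by
  obtain ⟨c, hc, -, hball⟩ := hsep
  intro x hx
  have hx1 : ‖x‖ < 1 := mem_ball_zero_iff.1 (hE hx)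
  exact ⟨c * (1 - ‖x‖), mul_pos hc (sub_pos.2 hx1), hball x hx⟩

theorem closure_eq_insert_of_diff_finite {X : Type*} [TopologicalSpace X] [T2Space X]
    {E : Set X} {w : X} (hinf : E.Infinite) (hfin : ∀ U ∈ 𝓝 w, (E \ U).Finite) :
    closure E = insert w E := by
  refine subset_antisymm (fun z hz => ?_) (insert_subset ?_ subset_closure)
  · rcases eq_or_ne z w with rfl | hzw
    · exact mem_insert _ _
    obtain ⟨U, V, hU, hV, hzU, hwV, hUV⟩ := t2_separation hzw
    have hUE : U ∩ E ⊆ E \ V := fun y hy => ⟨hy.2, hUV.notMem_of_mem_left hy.1⟩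
    have hzE : z ∈ closure (E \ V) := closure_mono hUE (hU.inter_closure ⟨hzU, hz⟩)
    rw [(hfin V (hV.mem_nhds hwV)).isClosed.closure_eq] at hzE
    exact mem_insert_of_mem _ hzE.1
  · by_contra hw
    obtain ⟨U, hU, hUE⟩ : ∃ U ∈ 𝓝 w, U ∩ E = ∅ := by
      simpa [mem_closure_iff_nhds, not_nonempty_iff_eq_empty] using hw
    have hEU : E \ U = E :=
      sdiff_eq_left.2 (disjoint_iff_inter_eq_empty.2 (by rwa [inter_comm]))
    exact hinf (hEU ▸ hfin U hU)

theorem limitSet_eq_singleton {n : ℕ} {E : Set (Pt n)} {w : Pt n} (hw : w ∉ E)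
    (hinf : E.Infinite) (hfin : ∀ U ∈ 𝓝 w, (E \ U).Finite) : limitSet E = {w} := by
  rw [limitSet, closure_eq_insert_of_diff_finite hinf hfin, insert_sdiff_eq_singleton hw]

theorem critExp_eq_of_accSeries {n : ℕ} {E : Set (Pt n)} {d : ℝ≥0}
    (hlt : ∀ s : ℝ≥0, d < s → accSeries E s < ⊤)
    (htop : ∀ s : ℝ≥0, s < d → accSeries E s = ⊤) :
    critExp E = d := by
  refine le_antisymm (ENNReal.le_of_forall_pos_le_add fun ε hε _ => ?_)
    (le_iInf₂ fun s hs => ?_)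
  · exact (iInf₂_le (d + ε) (hlt _ (lt_add_of_pos_right d hε))).trans_eq (ENNReal.coe_add ..)
  · by_contra! h
    exact (htop s (by exact_mod_cast h)).not_lt hs

theorem packingNumber_singleton {n : ℕ} (w : Pt n) (δ : ℝ) :
    packingNumber ({w} : Set (Pt n)) δ = 1 := by
  refine le_antisymm (iSup₂_le fun Z hZ => iSup_le fun _ => ?_) ?_
  · exact_mod_cast Finset.card_le_one.2 fun x hx y hy => (hZ hx).trans (hZ hy).symm
  · exact le_iSup₂_of_le {w} (by simp) (le_iSup_of_le (by simp) (by simp))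

theorem upperBoxDim_singleton {n : ℕ} (w : Pt n) : upperBoxDim ({w} : Set (Pt n)) = 0 := by
  simp [upperBoxDim, packingNumber_singleton]

theorem lowerBoxDim_singleton {n : ℕ} (w : Pt n) : lowerBoxDim ({w} : Set (Pt n)) = 0 := by
  simp [lowerBoxDim, packingNumber_singleton]

section Counting

variable {c : ℕ → ℕ} {d : ℕ} {s : ℝ}

theorem half_pow_rpow (k : ℕ) : ((2⁻¹ : ℝ) ^ k) ^ s = ((2⁻¹ : ℝ) ^ s) ^ k :=
  (Real.rpow_pow_comm (by norm_num) s k).symm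

theorem natCast_mul_ofReal (m : ℕ) (x : ℝ) :
    (m : ℝ≥0∞) * ENNReal.ofReal x = ENNReal.ofReal (m * x) := by
  rw [ENNReal.ofReal_mul (Nat.cast_nonneg m), ENNReal.ofReal_natCast]

theorem two_pow_mul_half_rpow_lt_one (hs : d < s) : (2 : ℝ) ^ d * 2⁻¹ ^ s < 1 := by
  rw [Real.inv_rpow (by norm_num), ← div_eq_mul_inv, div_lt_one (by positivity),
    ← Real.rpow_natCast]
  exact Real.rpow_lt_rpow_of_exponent_lt (by norm_num) hs

theorem one_lt_two_pow_mul_half_rpow (hs : s < d) : 1 < (2 : ℝ) ^ d * 2⁻¹ ^ s := by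
  rw [Real.inv_rpow (by norm_num), ← div_eq_mul_inv, one_lt_div (by positivity),
    ← Real.rpow_natCast]
  exact Real.rpow_lt_rpow_of_exponent_lt (by norm_num) hs

theorem tsum_natCast_mul_half_pow_rpow_lt_top (hc : ∀ k, c k ≤ (2 ^ k) ^ d) (hs : d < s) :
    ∑' k, (c k : ℝ≥0∞) * ENNReal.ofReal (((2⁻¹ : ℝ) ^ k) ^ s) < ⊤ := by
  set q : ℝ := 2 ^ d * 2⁻¹ ^ s
  have hq : q < 1 := two_pow_mul_half_rpow_lt_one hs
  have hq0 : 0 ≤ q := by positivity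
  have hterm (k : ℕ) :
      (c k : ℝ≥0∞) * ENNReal.ofReal (((2⁻¹ : ℝ) ^ k) ^ s) ≤ ENNReal.ofReal (q ^ k) := by
    rw [natCast_mul_ofReal, half_pow_rpow]
    refine ENNReal.ofReal_le_ofReal ?_
    calc (c k : ℝ) * ((2⁻¹ : ℝ) ^ s) ^ k ≤ (2 ^ k) ^ d * ((2⁻¹ : ℝ) ^ s) ^ k := by
          gcongr; exact_mod_cast hc k
      _ = q ^ k := by rw [mul_pow, ← pow_mul, ← pow_mul, mul_comm k d]
  calc _ ≤ ∑' k, ENNReal.ofReal (q ^ k) := ENNReal.tsum_le_tsum hterm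
    _ = ENNReal.ofReal (∑' k, q ^ k) :=
      (ENNReal.ofReal_tsum_of_nonneg (fun k => by positivity)
        (summable_geometric_of_lt_one hq0 hq)).symm
    _ < ⊤ := ENNReal.ofReal_lt_top

theorem eventually_mul_add_two_pow_lt_pow {R : ℝ} (hR : 1 < R) (C d : ℕ) :
    ∀ᶠ k : ℕ in atTop, ((C * (k + 2) : ℕ) : ℝ) ^ d < R ^ k := by
  have hshift := ((tendsto_pow_const_div_const_pow_of_one_lt d hR).comp
    (tendsto_add_atTop_nat 2)).const_mul ((C : ℝ) ^ d * R ^ 2)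
  rw [mul_zero] at hshift
  refine ((tendsto_order.1 hshift).2 1 one_pos).mono fun k hk => ?_
  have hrw : (C : ℝ) ^ d * R ^ 2 * (((k + 2 : ℕ) : ℝ) ^ d / R ^ (k + 2))
      = ((C * (k + 2) : ℕ) : ℝ) ^ d / R ^ k := by
    rw [pow_add]; field_simp; push_cast; rw [mul_pow]
  rwa [Function.comp_apply, hrw, div_lt_one (by positivity)] at hk

theorem tsum_natCast_mul_half_pow_rpow_eq_top {C : ℕ}
    (hc : ∀ k, (2 ^ k) ^ d ≤ (C * (k + 2)) ^ d * c k) (hs : s < d) :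
    ∑' k, (c k : ℝ≥0∞) * ENNReal.ofReal (((2⁻¹ : ℝ) ^ k) ^ s) = ⊤ := by
  have hterm : ∀ᶠ k in atTop, 1 ≤ (c k : ℝ≥0∞) * ENNReal.ofReal (((2⁻¹ : ℝ) ^ k) ^ s) := by
    refine (eventually_mul_add_two_pow_lt_pow (one_lt_two_pow_mul_half_rpow hs) C d).mono
      fun k hk => ?_
    rw [natCast_mul_ofReal, half_pow_rpow, ← ENNReal.ofReal_one]
    refine ENNReal.ofReal_le_ofReal ?_
    have hck : ((2 : ℝ) ^ d * 2⁻¹ ^ s) ^ k ≤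
        ((C * (k + 2) : ℕ) : ℝ) ^ d * (c k * ((2⁻¹ : ℝ) ^ s) ^ k) := by
      calc ((2 : ℝ) ^ d * 2⁻¹ ^ s) ^ k = ((2 ^ k) ^ d : ℕ) * ((2⁻¹ : ℝ) ^ s) ^ k := by
            push_cast; rw [mul_pow, ← pow_mul, ← pow_mul, mul_comm k d]
        _ ≤ ((C * (k + 2)) ^ d * c k : ℕ) * ((2⁻¹ : ℝ) ^ s) ^ k := by
            gcongr; exact_mod_cast hc k
        _ = _ := by push_cast; ring
    by_contra! hlt
    have hP := pow_nonneg (Nat.cast_nonneg (α := ℝ) (C * (k + 2))) d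
    linarith [mul_le_mul_of_nonneg_left hlt.le hP]
  by_contra htop
  have hsmall := (tendsto_order.1 (ENNReal.tendsto_atTop_zero_of_tsum_ne_top htop)).2 1 one_pos
  obtain ⟨k, hk1, hk2⟩ := (hterm.and hsmall).exists
  exact hk2.not_ge hk1

end Counting

section Shells

variable {n : ℕ} {S : ℕ → Finset (Pt n)}

theorem half_pow_div_two_le_abs_sub {k l : ℕ} (h : k ≠ l) :
    (2⁻¹ : ℝ) ^ k / 2 ≤ |(2⁻¹ : ℝ) ^ k - 2⁻¹ ^ l| := by
  have hanti {i j : ℕ} (hij : i < j) : (2⁻¹ : ℝ) ^ j ≤ 2⁻¹ ^ i / 2 :=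
    calc (2⁻¹ : ℝ) ^ j ≤ 2⁻¹ ^ (i + 1) := pow_le_pow_of_le_one (by norm_num) (by norm_num) hij
      _ = 2⁻¹ ^ i / 2 := by rw [pow_succ]; ring
  have hpos : (0 : ℝ) < 2⁻¹ ^ k := by positivity
  rcases h.lt_or_gt with h | h
  · rw [abs_of_nonneg] <;> linarith [hanti h]
  · rw [abs_of_nonpos] <;> linarith [hanti h]

theorem iUnion_shells_subset_ball (hdepth : ∀ k, ∀ x ∈ S k, 1 - ‖x‖ = 2⁻¹ ^ k) :
    ⋃ k, (S k : Set (Pt n)) ⊆ ball 0 1 := by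
  refine iUnion_subset fun k x hx => mem_ball_zero_iff.2 ?_
  linarith [hdepth k x hx, pow_pos (by norm_num : (0 : ℝ) < 2⁻¹) k]

theorem pairwiseDisjoint_shells (hdepth : ∀ k, ∀ x ∈ S k, 1 - ‖x‖ = 2⁻¹ ^ k) :
    univ.PairwiseDisjoint fun k => (S k : Set (Pt n)) := by
  refine fun k _ l _ hkl => Finset.disjoint_coe.2 (Finset.disjoint_left.2 fun x hxk hxl => ?_)
  exact hkl (pow_right_injective₀ (by norm_num) (by norm_num)
    ((hdepth k x hxk).symm.trans (hdepth l x hxl)))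

theorem separatedSet_iUnion_shells (hdepth : ∀ k, ∀ x ∈ S k, 1 - ‖x‖ = 2⁻¹ ^ k)
    (hsep : ∀ k, (S k : Set (Pt n)).Pairwise fun x y => 2⁻¹ ^ k ≤ dist x y) :
    SeparatedSet (⋃ k, (S k : Set (Pt n))) := by
  refine ⟨1 / 3, by norm_num, by norm_num, fun x hx => ?_⟩
  obtain ⟨k, hxk⟩ := mem_iUnion.1 hx
  have hfar : ∀ y ∈ ⋃ l, (S l : Set (Pt n)), y ≠ x → 2⁻¹ ^ k / 2 ≤ dist y x := by
    intro y hy hyx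
    obtain ⟨l, hyl⟩ := mem_iUnion.1 hy
    rcases eq_or_ne k l with rfl | hkl
    · linarith [hsep k hyl hxk hyx, pow_pos (by norm_num : (0 : ℝ) < 2⁻¹) k]
    · calc 2⁻¹ ^ k / 2 ≤ |(2⁻¹ : ℝ) ^ k - 2⁻¹ ^ l| := half_pow_div_two_le_abs_sub hkl
        _ = |‖y‖ - ‖x‖| := by rw [← hdepth k x hxk, ← hdepth l y hyl]; ring_nf
        _ ≤ dist y x := abs_norm_sub_norm_le y x
  rw [hdepth k x hxk]
  refine eq_singleton_iff_unique_mem.2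
    ⟨⟨mem_closedBall_self (by positivity), hx⟩, fun y hy => by_contra fun hyx => ?_⟩
  linarith [hfar y hy.2 hyx, mem_closedBall.1 hy.1, pow_pos (by norm_num : (0 : ℝ) < 2⁻¹) k]

theorem accSeries_iUnion_shells (hdepth : ∀ k, ∀ x ∈ S k, 1 - ‖x‖ = 2⁻¹ ^ k) (s : ℝ) :
    accSeries (⋃ k, (S k : Set (Pt n))) s =
      ∑' k, ((S k).card : ℝ≥0∞) * ENNReal.ofReal (((2⁻¹ : ℝ) ^ k) ^ s) := by
  rw [accSeries, ENNReal.tsum_biUnion (f := fun x : Pt n => ENNReal.ofReal ((1 - ‖x‖) ^ s))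
    (pairwiseDisjoint_shells hdepth)]
  refine tsum_congr fun k => ?_
  rw [Finset.tsum_subtype' (S k) fun x => ENNReal.ofReal ((1 - ‖x‖) ^ s),
    Finset.sum_congr rfl fun x hx => by rw [hdepth k x hx], Finset.sum_const, nsmul_eq_mul]

theorem limitSet_iUnion_shells (hdepth : ∀ k, ∀ x ∈ S k, 1 - ‖x‖ = 2⁻¹ ^ k)
    (hne : ∀ k, (S k).Nonempty) {w : Pt n} (hw : ‖w‖ = 1) {ε : ℕ → ℝ}
    (hε : Tendsto ε atTop (𝓝 0)) (hnear : ∀ k, ∀ x ∈ S k, dist x w ≤ ε k) :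
    limitSet (⋃ k, (S k : Set (Pt n))) = {w} := by
  refine limitSet_eq_singleton (fun hwE => ?_) ?_ fun U hU => ?_
  · simpa [hw] using iUnion_shells_subset_ball hdepth hwE
  · choose x hx using hne
    refine infinite_of_injective_forall_mem (fun k l hkl => ?_) fun k => mem_iUnion.2 ⟨k, hx k⟩
    refine pow_right_injective₀ (by norm_num : (0 : ℝ) < 2⁻¹) (by norm_num) ?_
    simp only [← hdepth k _ (hx k), ← hdepth l _ (hx l), hkl]
  · obtain ⟨r, hr, hrU⟩ := Metric.mem_nhds_iff.1 hU
    obtain ⟨N, hN⟩ := eventually_atTop.1 ((tendsto_order.1 hε).2 r hr)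
    refine ((Finset.range N).finite_toSet.biUnion fun k _ => (S k).finite_toSet).subset ?_
    rintro x ⟨hx, hxU⟩
    obtain ⟨k, hxk⟩ := mem_iUnion.1 hx
    refine mem_iUnion₂.2 ⟨k, Finset.mem_range.2 (not_le.1 fun hk => hxU (hrU ?_)), hxk⟩
    exact mem_ball.2 ((hnear k x hxk).trans_lt (hN k hk))

theorem critExp_iUnion_shells (hdepth : ∀ k, ∀ x ∈ S k, 1 - ‖x‖ = 2⁻¹ ^ k) {d C : ℕ}
    (hle : ∀ k, (S k).card ≤ (2 ^ k) ^ d)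
    (hge : ∀ k, (2 ^ k) ^ d ≤ (C * (k + 2)) ^ d * (S k).card) :
    critExp (⋃ k, (S k : Set (Pt n))) = d := by
  rw [← ENNReal.coe_natCast]
  refine critExp_eq_of_accSeries (fun s hs => ?_) fun s hs => ?_ <;>
    rw [accSeries_iUnion_shells hdepth]
  · exact tsum_natCast_mul_half_pow_rpow_lt_top hle (by exact_mod_cast hs)
  · exact tsum_natCast_mul_half_pow_rpow_eq_top hge (by exact_mod_cast hs)

end Shells

section Chart

variable {d : ℕ}

def sphereChart (r : ℝ) (t : Fin d → ℝ) : Pt (d + 1) :=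
  WithLp.toLp 2 (Fin.cons (√(r ^ 2 - ∑ i, t i ^ 2)) t)

@[simp]
theorem sphereChart_zero (r : ℝ) (t : Fin d → ℝ) :
    sphereChart r t 0 = √(r ^ 2 - ∑ i, t i ^ 2) := rfl

@[simp]
theorem sphereChart_succ (r : ℝ) (t : Fin d → ℝ) (i : Fin d) :
    sphereChart r t i.succ = t i := rfl

theorem norm_sphereChart {r : ℝ} {t : Fin d → ℝ} (hr : 0 ≤ r) (ht : ∑ i, t i ^ 2 ≤ r ^ 2) :
    ‖sphereChart r t‖ = r := by
  rw [← sq_eq_sq₀ (norm_nonneg _) hr, EuclideanSpace.real_norm_sq_eq, Fin.sum_univ_succ]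
  simp [Real.sq_sqrt (sub_nonneg.2 ht)]

theorem abs_sub_le_dist_sphereChart (r r' : ℝ) (t t' : Fin d → ℝ) (i : Fin d) :
    |t i - t' i| ≤ dist (sphereChart r t) (sphereChart r' t') := by
  simpa [Real.dist_eq] using PiLp.dist_apply_le (sphereChart r t) (sphereChart r' t') i.succ

theorem dist_sphereChart_single_le {r δ : ℝ} {t : Fin d → ℝ} (hδ : 0 ≤ δ) (hδr : δ ≤ r)
    (hr : r ≤ 1) (ht : ∑ i, t i ^ 2 ≤ δ ^ 2) :
    dist (sphereChart r t) (EuclideanSpace.single 0 1) ≤ 1 - r + 2 * δ := by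
  set h := √(r ^ 2 - ∑ i, t i ^ 2)
  have hh : h ^ 2 = r ^ 2 - ∑ i, t i ^ 2 := Real.sq_sqrt (by nlinarith)
  have hh0 : 0 ≤ h := Real.sqrt_nonneg _
  have hS : 0 ≤ ∑ i, t i ^ 2 := Finset.sum_nonneg fun i _ => sq_nonneg _
  have hhr : h ≤ r := by nlinarith
  -- `(r - h)² ≤ (r - h)(r + h) = ∑ tᵢ² ≤ δ²`
  have hrh : r - h ≤ δ := by nlinarith
  rw [EuclideanSpace.dist_eq, Real.sqrt_le_left (by linarith), Fin.sum_univ_succ]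
  simp only [sphereChart_zero, sphereChart_succ, PiLp.single_apply, Real.dist_eq, sq_abs,
    Fin.succ_ne_zero, if_true, if_false, sub_zero]
  have h1 : (1 - h) ^ 2 ≤ (1 - r + δ) ^ 2 := pow_le_pow_left₀ (by linarith) (by linarith) 2
  nlinarith

end Chart

section Grid

def gridWidth (d k : ℕ) : ℕ := 2 ^ k / ((d + 1) * (k + 2))

theorem gridWidth_mul_le (d k : ℕ) : gridWidth d k * ((d + 1) * (k + 2)) ≤ 2 ^ k :=
  Nat.div_mul_le_self _ _

theorem two_pow_lt_gridWidth_succ_mul (d k : ℕ) :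
    2 ^ k < (gridWidth d k + 1) * ((d + 1) * (k + 2)) := by
  rw [add_one_mul]; exact Nat.lt_div_mul_add (by positivity)

theorem gridWidth_succ_le (d k : ℕ) : gridWidth d k + 1 ≤ 2 ^ k := by
  have h := gridWidth_mul_le d k
  have : gridWidth d k * 2 ≤ gridWidth d k * ((d + 1) * (k + 2)) :=
    Nat.mul_le_mul_left _ (by nlinarith)
  have := Nat.one_le_two_pow (n := k)
  omega

theorem mul_gridWidth_mul_le (d k : ℕ) : d * gridWidth d k * (k + 2) ≤ 2 ^ k :=
  le_trans (by nlinarith) (gridWidth_mul_le d k)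

def gridRadius (d k : ℕ) : ℝ := d * gridWidth d k * 2⁻¹ ^ k

theorem gridRadius_nonneg (d k : ℕ) : 0 ≤ gridRadius d k := by
  unfold gridRadius; positivity

theorem gridRadius_le_one_sub (d k : ℕ) : gridRadius d k ≤ 1 - 2⁻¹ ^ k := by
  have hlt : d * gridWidth d k + 1 ≤ 2 ^ k := by
    have := Nat.one_le_two_pow (n := k)
    have : d * gridWidth d k * 2 ≤ d * gridWidth d k * (k + 2) := by gcongr; omega
    have := mul_gridWidth_mul_le d k
    omega
  have hlt' : (d * gridWidth d k + 1 : ℝ) ≤ 2 ^ k := by exact_mod_cast hlt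
  have h2 : (2⁻¹ : ℝ) ^ k * 2 ^ k = 1 := by rw [← mul_pow]; norm_num
  have hpos : (0 : ℝ) < 2⁻¹ ^ k := by positivity
  unfold gridRadius
  nlinarith

theorem gridRadius_le_one_div (d k : ℕ) : gridRadius d k ≤ 1 / (k + 1) := by
  have hle : d * gridWidth d k * (k + 1) ≤ 2 ^ k :=
    le_trans (by gcongr; omega) (mul_gridWidth_mul_le d k)
  have hle' : (d * gridWidth d k * (k + 1) : ℝ) ≤ 2 ^ k := by exact_mod_cast hle
  have h2 : (2⁻¹ : ℝ) ^ k * 2 ^ k = 1 := by rw [← mul_pow]; norm_num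
  have hpos : (0 : ℝ) < 2⁻¹ ^ k := by positivity
  rw [gridRadius, le_div_iff₀ (by positivity)]
  nlinarith

theorem sum_sq_grid_le {d k : ℕ} (a : Fin d → Fin (gridWidth d k + 1)) :
    ∑ i, ((a i : ℕ) * 2⁻¹ ^ k : ℝ) ^ 2 ≤ gridRadius d k ^ 2 := by
  calc ∑ i, ((a i : ℕ) * 2⁻¹ ^ k : ℝ) ^ 2
      ≤ ∑ _i : Fin d, (gridWidth d k * 2⁻¹ ^ k : ℝ) ^ 2 :=
        Finset.sum_le_sum fun i _ => by gcongr; exact_mod_cast Nat.le_of_lt_succ (a i).isLt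
    _ = d * (gridWidth d k * 2⁻¹ ^ k : ℝ) ^ 2 := by simp
    _ ≤ gridRadius d k ^ 2 := by
        rw [gridRadius, mul_assoc, mul_pow (d : ℝ)]
        gcongr
        exact_mod_cast Nat.le_self_pow two_ne_zero d

end Grid

section Shell

variable {d : ℕ} (f : Pt (d + 1) →ₗᵢ[ℝ] Pt (d + 1)) (k : ℕ)

def shellPoint (a : Fin d → Fin (gridWidth d k + 1)) : Pt (d + 1) :=
  f (sphereChart (1 - 2⁻¹ ^ k) fun i => (a i : ℕ) * 2⁻¹ ^ k)

def shell : Finset (Pt (d + 1)) :=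
  Finset.univ.image (shellPoint f k)

theorem one_sub_norm_of_mem_shell {x : Pt (d + 1)} (hx : x ∈ shell f k) :
    1 - ‖x‖ = 2⁻¹ ^ k := by
  obtain ⟨a, -, rfl⟩ := Finset.mem_image.1 hx
  have hr := gridRadius_le_one_sub d k
  have h0 := gridRadius_nonneg d k
  rw [shellPoint, f.norm_map, norm_sphereChart]
  · ring
  · linarith
  · exact (sum_sq_grid_le a).trans (pow_le_pow_left₀ h0 hr 2)

theorem dist_shellPoint_ge {a b : Fin d → Fin (gridWidth d k + 1)} (hab : a ≠ b) :
    2⁻¹ ^ k ≤ dist (shellPoint f k a) (shellPoint f k b) := by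
  obtain ⟨i, hi⟩ := Function.ne_iff.1 hab
  have hone : (1 : ℝ) ≤ |((a i : ℕ) : ℝ) - (b i : ℕ)| := by
    rcases lt_or_gt_of_ne (Fin.val_ne_of_ne hi) with h | h
    · have : ((a i : ℕ) : ℝ) + 1 ≤ (b i : ℕ) := by exact_mod_cast h
      exact le_abs.2 (Or.inr (by linarith))
    · have : ((b i : ℕ) : ℝ) + 1 ≤ (a i : ℕ) := by exact_mod_cast h
      exact le_abs.2 (Or.inl (by linarith))
  rw [shellPoint, shellPoint, f.dist_map]
  refine le_trans ?_ (abs_sub_le_dist_sphereChart _ _ _ _ i)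
  rw [← sub_mul, abs_mul, abs_of_pos (pow_pos (by norm_num : (0 : ℝ) < 2⁻¹) k)]
  exact le_mul_of_one_le_left (by positivity) hone

theorem pairwise_shell :
    (shell f k : Set (Pt (d + 1))).Pairwise fun x y => 2⁻¹ ^ k ≤ dist x y := by
  simp only [shell, Finset.coe_image, Finset.coe_univ, image_univ]
  rintro _ ⟨a, rfl⟩ _ ⟨b, rfl⟩ hab
  exact dist_shellPoint_ge f k fun h => hab (h ▸ rfl)

theorem card_shell : (shell f k).card = (gridWidth d k + 1) ^ d := by
  rw [shell, Finset.card_image_of_injective, Finset.card_univ, Fintype.card_fun,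
    Fintype.card_fin, Fintype.card_fin]
  intro a b hab
  by_contra hne
  have := dist_shellPoint_ge f k hne
  rw [hab, dist_self] at this
  exact (pow_pos (by norm_num : (0 : ℝ) < 2⁻¹) k).not_ge this

theorem card_shell_le : (shell f k).card ≤ (2 ^ k) ^ d := by
  rw [card_shell]
  exact Nat.pow_le_pow_left (gridWidth_succ_le d k) d

theorem two_pow_pow_le_card_shell :
    (2 ^ k) ^ d ≤ ((d + 1) * (k + 2)) ^ d * (shell f k).card := by
  rw [card_shell, ← mul_pow, mul_comm]
  exact Nat.pow_le_pow_left (two_pow_lt_gridWidth_succ_mul d k).le d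

theorem dist_le_of_mem_shell {x : Pt (d + 1)} (hx : x ∈ shell f k) :
    dist x (f (EuclideanSpace.single 0 1)) ≤ 2⁻¹ ^ k + 2 * (1 / (k + 1)) := by
  obtain ⟨a, -, rfl⟩ := Finset.mem_image.1 hx
  have hpos : (0 : ℝ) < 2⁻¹ ^ k := by positivity
  rw [shellPoint, f.dist_map]
  refine (dist_sphereChart_single_le (gridRadius_nonneg d k) (gridRadius_le_one_sub d k)
    (by linarith) (sum_sq_grid_le a)).trans ?_
  linarith [gridRadius_le_one_div d k]

end Shell

theorem exists_separated_singleton_limitSet_critExp_max_general {n : ℕ}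
    (w : Pt n) (hw : w ∈ sphere (0 : Pt n) 1) :
    ∃ E : Set (Pt n), E ⊆ ball 0 1 ∧ IsDiscreteSet E ∧ SeparatedSet E ∧
      limitSet E = {w} ∧
      dimH (limitSet E) = 0 ∧
      lowerBoxDim (limitSet E) = 0 ∧
      upperBoxDim (limitSet E) = 0 ∧
      critExp E = ((n - 1 : ℕ) : ℝ≥0∞) := by
  have hw1 : ‖w‖ = 1 := by simpa using hw
  obtain ⟨d, rfl⟩ : ∃ d, n = d + 1 := Nat.exists_eq_add_one.2 <| Nat.pos_of_ne_zero <| by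
    rintro rfl; simp [Subsingleton.elim w 0] at hw1
  set e : Pt (d + 1) := EuclideanSpace.single 0 1
  set f := (Submodule.reflection (ℝ ∙ (e - w))ᗮ).toLinearIsometry
  have hfe : f e = w := Submodule.reflection_sub (by simp [e, hw1])
  have hdepth := one_sub_norm_of_mem_shell f
  have hball := iUnion_shells_subset_ball hdepth
  have hsep := separatedSet_iUnion_shells hdepth (pairwise_shell f)
  have hε : Tendsto (fun k : ℕ => (2⁻¹ : ℝ) ^ k + 2 * (1 / (k + 1))) atTop (𝓝 0) := by
    simpa using (tendsto_pow_atTop_nhds_zero_of_lt_one (r := (2⁻¹ : ℝ)) (by norm_num)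
      (by norm_num)).add (tendsto_one_div_add_atTop_nhds_zero_nat.const_mul (2 : ℝ))
  have hlim := limitSet_iUnion_shells hdepth (fun k => Finset.univ_nonempty.image _) hw1 hε
    (hfe ▸ dist_le_of_mem_shell f)
  refine ⟨_, hball, hsep.isDiscreteSet hball, hsep, hlim, ?_, ?_, ?_, ?_⟩
  · rw [hlim]; exact dimH_singleton w
  · rw [hlim]; exact lowerBoxDim_singleton w
  · rw [hlim]; exact upperBoxDim_singleton w
  · exact critExp_iUnion_shells hdepth (card_shell_le f) (two_pow_pow_le_card_shell f)

/-- **Example: for any `w ∈ S^{n-1}` (n ≥ 2) there is a discrete separated `E ⊆ 𝔻ⁿ` with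
`L(E) = {w}` (whence `dim_H L(E) = dim_B L(E) = 0`) but `δ(E) = n − 1`.** -/
theorem exists_separated_singleton_limitSet_critExp_max {n : ℕ} (hn : 2 ≤ n)
    (w : Pt n) (hw : w ∈ sphere (0 : Pt n) 1) :
    ∃ E : Set (Pt n), E ⊆ ball 0 1 ∧ IsDiscreteSet E ∧ SeparatedSet E ∧
      limitSet E = {w} ∧
      dimH (limitSet E) = 0 ∧
      lowerBoxDim (limitSet E) = 0 ∧
      upperBoxDim (limitSet E) = 0 ∧
      critExp E = ((n - 1 : ℕ) : ℝ≥0∞) :=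
  exists_separated_singleton_limitSet_critExp_max_general w hw

end
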